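/- arXiv:2605.06922 — 7 statements merged into one kernel-verified Lean document; each statement's English description precedes it below -/
import Mathlib

section
/- Let K be an algebraically closed field of characteristic zero and L a finite-dimensional Lie algebra over K whose Killing form is nondegenerate, with H ⊆ L a Cartan subalgebra acting triangularizably on L. Let f : L → K be a linear functional whose 'centralizer' is exactly H, meaning: for y ∈ L one has f(⁅y, x⁆) = 0 for all x ∈ L if and only if y ∈ H. Then for every nonzero root α of H in L, the value of f on the coroot of α is nonzero: f(h_α) ≠ 0. -/
/-!
Suppose `f (h_α) = 0` and pick a nonzero `e ∈ L_α`. Since `H` lies in the radical of `B_f`, `f`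
kills every root space `L_χ` with `χ ≠ 0` (there `ad h` acts by the scalar `χ h`), and it kills
`⁅L_α, L_{-α}⁆ = K ∙ h_α` by assumption. Hence `f ⁅e, L_χ⁆ = 0` for every `χ`, so `e` lies in the
radical of `B_f`, i.e. in `H`; but a Cartan subalgebra meets no nonzero root space.
-/

open LieAlgebra LieModule LieAlgebra.IsKilling

lemma LinearMap.eq_zero_of_forall_mem_genWeightSpace
    {K L M V : Type*} [Field K] [LieRing L] [LieAlgebra K L] [AddCommGroup M] [Module K M]
    [LieRing.IsNilpotent L] [LieRingModule L M] [LieModule K L M] [IsTriangularizable K L M]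
    [FiniteDimensional K M]
    [AddCommGroup V] [Module K V] (g : M →ₗ[K] V)
    (hg : ∀ χ : L → K, ∀ m ∈ genWeightSpace M χ, g m = 0) : g = 0 := by
  have hle : ⨆ χ : L → K, (genWeightSpace M χ).toSubmodule ≤ LinearMap.ker g :=
    iSup_le fun χ m hm ↦ hg χ m hm
  rwa [← LieSubmodule.iSup_toSubmodule, iSup_genWeightSpace_eq_top,
    LieSubmodule.top_toSubmodule, top_le_iff, LinearMap.ker_eq_top] at hle

namespace LieAlgebra.IsKilling

variable {K L : Type*} [Field K] [LieRing L] [LieAlgebra K L] [FiniteDimensional K L]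
  [IsKilling K L] {H : LieSubalgebra K L} [H.IsCartanSubalgebra] [IsTriangularizable K H L]
  (f : L →ₗ[K] K)

section PerfectField

variable [PerfectField K]

lemma eq_zero_of_mem_rootSpace_of_mem_cartan {χ : H → K} (hχ : χ ≠ 0) {e : L}
    (he : e ∈ rootSpace H χ) (heH : e ∈ H) : e = 0 := by
  obtain ⟨h, hh⟩ := Function.ne_iff.mp hχ
  have hcomm : ⁅(h : L), e⁆ = 0 := congrArg Subtype.val (trivial_lie_zero H H h ⟨e, heH⟩)
  rw [← LieSubalgebra.coe_bracket_of_module, lie_eq_smul_of_mem_rootSpace he h] at hcomm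
  exact (smul_eq_zero.mp hcomm).resolve_left hh

lemma apply_eq_zero_of_mem_rootSpace (hfH : ∀ (h : H) (x : L), f ⁅(h : L), x⁆ = 0)
    {χ : H → K} (hχ : χ ≠ 0) {z : L} (hz : z ∈ rootSpace H χ) : f z = 0 := by
  obtain ⟨h, hh⟩ := Function.ne_iff.mp hχ
  have hfz := hfH h z
  rw [← LieSubalgebra.coe_bracket_of_module, lie_eq_smul_of_mem_rootSpace hz, map_smul,
    smul_eq_mul] at hfz
  exact (mul_eq_zero.mp hfz).resolve_left hh

end PerfectField

variable [CharZero K] {α : Weight K H L}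

lemma apply_eq_zero_of_mem_corootSpace (hfα : f (coroot α) = 0) {x : H}
    (hx : x ∈ corootSpace α) : f x = 0 := by
  rw [← LieSubmodule.mem_toSubmodule, coe_corootSpace_eq_span_singleton,
    Submodule.mem_span_singleton] at hx
  obtain ⟨t, rfl⟩ := hx
  simp [hfα]

lemma apply_lie_eq_zero_of_mem_rootSpace_of_mem_rootSpace_neg (hfα : f (coroot α) = 0)
    {e y : L} (he : e ∈ rootSpace H α) (hy : y ∈ rootSpace H (-α)) : f ⁅e, y⁆ = 0 := by
  rw [lie_eq_killingForm_smul_of_mem_rootSpace_of_mem_rootSpace_neg he hy, map_smul,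
    apply_eq_zero_of_mem_corootSpace f hfα (cartanEquivDual_symm_apply_mem_corootSpace α),
    smul_zero]

lemma apply_lie_eq_zero_of_mem_rootSpace (hfH : ∀ (h : H) (x : L), f ⁅(h : L), x⁆ = 0)
    (hfα : f (coroot α) = 0) {e : L} (he : e ∈ rootSpace H α) (x : L) : f ⁅e, x⁆ = 0 := by
  suffices f ∘ₗ (ad K L e : Module.End K L) = 0 from LinearMap.congr_fun this x
  refine LinearMap.eq_zero_of_forall_mem_genWeightSpace (L := H) _ fun χ y hy ↦ ?_
  change f ⁅e, y⁆ = 0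
  by_cases hsum : (α : H → K) + χ = 0
  · rw [eq_neg_of_add_eq_zero_right hsum] at hy
    exact apply_lie_eq_zero_of_mem_rootSpace_of_mem_rootSpace_neg f hfα he hy
  · exact apply_eq_zero_of_mem_rootSpace f hfH hsum
      (lie_mem_genWeightSpace_of_mem_genWeightSpace he hy)

end LieAlgebra.IsKilling

theorem regular_functional_nonzero_on_coroot_general
    (K L : Type*) [Field K] [CharZero K]
    [LieRing L] [LieAlgebra K L] [FiniteDimensional K L] [LieAlgebra.IsKilling K L]
    (H : LieSubalgebra K L) [H.IsCartanSubalgebra] [LieModule.IsTriangularizable K H L]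
    (f : L →ₗ[K] K)
    (hf : ∀ y : L, (∀ x : L, f ⁅y, x⁆ = 0) ↔ y ∈ H)
    (α : LieModule.Weight K H L) (hα : α.IsNonZero) :
    f (LieAlgebra.IsKilling.coroot α : L) ≠ 0 := by
  intro hfα
  have hfH : ∀ (h : H) (x : L), f ⁅(h : L), x⁆ = 0 := fun h ↦ (hf h).mpr h.2
  obtain ⟨e, he, he0⟩ := α.exists_ne_zero
  have heH : e ∈ H := (hf e).mp (apply_lie_eq_zero_of_mem_rootSpace f hfH hfα he)
  exact he0 (eq_zero_of_mem_rootSpace_of_mem_cartan hα he heH)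

/-- Lemma 2.3.2(2): let `L` be a finite-dimensional Lie algebra over an algebraically closed
field `K` of characteristic zero with nondegenerate Killing form, `H` a Cartan subalgebra
acting triangularizably on `L`, and `f : L → K` a linear functional whose centralizer
(the radical of the form `B_f(x,y) = f ⁅x,y⁆`) is exactly `H`.  Then for every nonzero root
`α` of `H` in `L` the value of `f` on the coroot of `α` is nonzero. -/
theorem regular_functional_nonzero_on_coroot
    (K L : Type*) [Field K] [IsAlgClosed K] [CharZero K]
    [LieRing L] [LieAlgebra K L] [FiniteDimensional K L] [LieAlgebra.IsKilling K L]
    (H : LieSubalgebra K L) [H.IsCartanSubalgebra] [LieModule.IsTriangularizable K H L]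
    (f : L →ₗ[K] K)
    (hf : ∀ y : L, (∀ x : L, f ⁅y, x⁆ = 0) ↔ y ∈ H)
    (α : LieModule.Weight K H L) (hα : α.IsNonZero) :
    f (LieAlgebra.IsKilling.coroot α : L) ≠ 0 :=
  regular_functional_nonzero_on_coroot_general K L H f hf α hα
end

section
/- Let K be a field, L a finite-dimensional Lie algebra over K, H ⊆ L a nilpotent Lie subalgebra, and f : L → K a linear functional centralized by H (f(⁅h, x⁆) = 0 for all h ∈ H, x ∈ L). Let u ⊆ L be a Lie subalgebra that is contained, as a submodule, in the sum of the generalized weight spaces L_χ over all weights χ of H on L that are not identically zero. Then u is isotropic for the form B_f: for all x, y ∈ u one has f(⁅x, y⁆) = 0. In particular, the nilpotent radical of a Borel subalgebra containing a Cartan subalgebra H is isotropic for B_f. -/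
/-!
On a generalized weight space `L_χ` with `χ h₀ ≠ 0`, the element `h₀` acts as the unit `χ h₀`
plus a nilpotent, so `L_χ ⊆ ⁅h₀, L⁆ ⊆ ker f`. Since `u` is a subalgebra, `⁅x, y⁆ ∈ u`, which lies
in the span of such weight spaces.
-/

namespace LieModule

variable {R L M : Type*} [CommRing R] [LieRing L] [LieAlgebra R L] [LieRing.IsNilpotent L]
  [AddCommGroup M] [Module R M] [LieRingModule L M] [LieModule R L M] [IsNoetherian R M]

lemma isUnit_toEnd_genWeightSpace {χ : L → R} {x : L} (hχ : IsUnit (χ x)) :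
    IsUnit (toEnd R L (genWeightSpace M χ) x) := by
  have hnil := isNilpotent_toEnd_sub_algebraMap M χ x
  simpa using hnil.isUnit_add_right_of_commute (hχ.map (algebraMap R _))
    (Algebra.commutes _ _).symm

lemma genWeightSpace_le_range_toEnd {χ : L → R} {x : L} (hχ : IsUnit (χ x)) :
    (genWeightSpace M χ).toSubmodule ≤ LinearMap.range (toEnd R L M x) := by
  intro m hm
  obtain ⟨n, hn⟩ := ((Module.End.isUnit_iff _).mp (isUnit_toEnd_genWeightSpace hχ)).surjective
    ⟨m, hm⟩
  exact ⟨n, congrArg Subtype.val hn⟩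

end LieModule

/-- Corollary 2.3.4 (isotropy): let `H` be a nilpotent subalgebra of a finite-dimensional Lie
algebra `L` over a field `K`, and `f : L → K` a linear functional centralized by `H`.  If a Lie
subalgebra `u ⊆ L` is contained (as a submodule) in the sum of the generalized weight spaces of
`H` on `L` attached to weights that are not identically zero, then `u` is isotropic for the
alternating form `B_f(x, y) = f ⁅x, y⁆`. -/
theorem nilradical_isotropic_for_Bf
    (K L : Type*) [Field K] [LieRing L] [LieAlgebra K L] [FiniteDimensional K L]
    (H : LieSubalgebra K L) [LieRing.IsNilpotent H]
    (f : L →ₗ[K] K) (hf : ∀ (h : H) (x : L), f ⁅(h : L), x⁆ = 0)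
    (u : LieSubalgebra K L)
    (hu : u.toSubmodule ≤
      ⨆ χ ∈ {χ : H → K | ∃ h₀ : H, χ h₀ ≠ 0},
        (LieModule.genWeightSpace L χ).toSubmodule)
    (x y : L) (hx : x ∈ u) (hy : y ∈ u) :
    f ⁅x, y⁆ = 0 := by
  have hker : u.toSubmodule ≤ LinearMap.ker f := by
    refine hu.trans (iSup₂_le fun χ ⟨h₀, hχ⟩ ↦ ?_)
    refine (LieModule.genWeightSpace_le_range_toEnd (Ne.isUnit hχ)).trans ?_
    rintro _ ⟨z, rfl⟩
    exact hf h₀ z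
  exact hker (u.lie_mem hx hy)
end

section
/- Let V be a finite-dimensional complex vector space, B : V × V → ℂ a nondegenerate alternating bilinear form, and s : V → V a linear automorphism preserving B (B(s x, s y) = B(x, y) for all x, y). Let W ⊆ V be an s-invariant subspace that is Lagrangian for B, i.e. W = { v ∈ V : B(v, w) = 0 for all w ∈ W }. If the restriction s|_W has determinant of absolute value 1, then |det(id_W − s|_W)|² = |det(id_V − s)|. -/
/-!
Split `det (1 - s)` along the invariant subspace `W` as `det (1 - s|_W) * det (1 - s̄)`, with `s̄`
induced on `V ⧸ W`. Since `W` is its own orthogonal and `B` is nondegenerate, `v ↦ B v ·|_W`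
identifies `V ⧸ W` with the dual of `W`, and invariance of `B` makes `(s|_W)ᵀ` a left inverse of
`s̄` there. Hence `det (s|_W) * det (1 - s̄) = ± det (1 - s|_W)`, and `|det (s|_W)| = 1` gives the
claim.
-/

open LinearMap Module

theorem LinearMap.det_mul_det_id_sub_of_comp_eq_id {K M : Type*} [Field K] [AddCommGroup M]
    [Module K M] [FiniteDimensional K M] {T u : M →ₗ[K] M} (h : T ∘ₗ u = id) :
    LinearMap.det T * LinearMap.det (id - u) = (-1) ^ finrank K M * LinearMap.det (id - T) := by
  have : T ∘ₗ (id - u) = (-1 : K) • (id - T) := by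
    rw [comp_sub, comp_id, h, neg_one_smul, neg_sub]
  rw [← det_comp, this, det_smul]

theorem LinearMap.det_id_sub_eq_det_restrict_mul_det_mapQ {K V : Type*} [Field K]
    [AddCommGroup V] [Module K V] [FiniteDimensional K V] (W : Submodule K V) (e : V →ₗ[K] V)
    (he : W ≤ W.comap e) :
    LinearMap.det (id - e) =
      LinearMap.det (id - e.restrict he) * LinearMap.det (id - W.mapQ W e he) := by
  rw [det_eq_det_mul_det W (id - e) fun _ hx => Submodule.mem_comap.2 (W.sub_mem hx (he hx))]
  congr 2
  ext x; rfl

namespace LinearMap.BilinForm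

variable {K V : Type*} [Field K] [AddCommGroup V] [Module K V]

theorem ker_domRestrict₂_eq {B : LinearMap.BilinForm K V} {W : Submodule K V}
    (hLag : ∀ v : V, v ∈ W ↔ ∀ w ∈ W, B v w = 0) : ker (B.domRestrict₂ W) = W := by
  ext v
  simp only [mem_ker, LinearMap.ext_iff, domRestrict₂_apply, Subtype.forall]
  exact (hLag v).symm

theorem domRestrict₂_surjective [FiniteDimensional K V] {B : LinearMap.BilinForm K V}
    (hB : B.Nondegenerate) (W : Submodule K V) : Function.Surjective (B.domRestrict₂ W) := by
  have : B.domRestrict₂ W = W.subtype.dualMap ∘ₗ (B.toDual hB).toLinearMap := by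
    ext v w; simp [domRestrict₂_apply, toDual_def]
  rw [this, coe_comp]
  exact (dualMap_surjective_of_injective W.injective_subtype).comp (B.toDual hB).surjective

noncomputable def lagrangianQuotEquivDual [FiniteDimensional K V] (B : LinearMap.BilinForm K V)
    (hB : B.Nondegenerate) (W : Submodule K V) (hLag : ∀ v : V, v ∈ W ↔ ∀ w ∈ W, B v w = 0) :
    (V ⧸ W) ≃ₗ[K] Dual K W :=
  (W.quotEquivOfEq _ (ker_domRestrict₂_eq hLag).symm).trans
    ((B.domRestrict₂ W).quotKerEquivOfSurjective (domRestrict₂_surjective hB W))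

@[simp]
theorem lagrangianQuotEquivDual_mk [FiniteDimensional K V] {B : LinearMap.BilinForm K V}
    (hB : B.Nondegenerate) {W : Submodule K V} (hLag : ∀ v : V, v ∈ W ↔ ∀ w ∈ W, B v w = 0)
    (v : V) (w : W) : lagrangianQuotEquivDual B hB W hLag (Submodule.Quotient.mk v) w = B v w :=
  rfl

theorem dualMap_restrict_lagrangianQuotEquivDual_mapQ [FiniteDimensional K V]
    {B : LinearMap.BilinForm K V} (hB : B.Nondegenerate) {W : Submodule K V}
    (hLag : ∀ v : V, v ∈ W ↔ ∀ w ∈ W, B v w = 0) {s : V →ₗ[K] V}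
    (hsB : ∀ x y : V, B (s x) (s y) = B x y) (hW : W ≤ W.comap s) (x : V ⧸ W) :
    (s.restrict hW).dualMap (lagrangianQuotEquivDual B hB W hLag (W.mapQ W s hW x)) =
      lagrangianQuotEquivDual B hB W hLag x := by
  induction x using Submodule.Quotient.induction_on with | H v => ?_
  ext w
  simp [hsB]

theorem det_restrict_mul_det_id_sub_mapQ [FiniteDimensional K V]
    {B : LinearMap.BilinForm K V} (hB : B.Nondegenerate) {W : Submodule K V}
    (hLag : ∀ v : V, v ∈ W ↔ ∀ w ∈ W, B v w = 0) {s : V →ₗ[K] V}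
    (hsB : ∀ x y : V, B (s x) (s y) = B x y) (hW : W ≤ W.comap s) :
    LinearMap.det (s.restrict hW) * LinearMap.det (id - W.mapQ W s hW) =
      (-1) ^ finrank K W * LinearMap.det (id - s.restrict hW) := by
  set φ := lagrangianQuotEquivDual B hB W hLag
  set sW := s.restrict hW
  set sQ := W.mapQ W s hW
  have hinv : sW.dualMap ∘ₗ (φ.toLinearMap ∘ₗ sQ ∘ₗ φ.symm.toLinearMap) = id := by
    ext f
    simp [φ, sW, sQ, dualMap_restrict_lagrangianQuotEquivDual_mapQ hB hLag hsB]
  have hconj : LinearMap.det (id - φ.toLinearMap ∘ₗ sQ ∘ₗ φ.symm.toLinearMap) =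
      LinearMap.det (id - sQ) := by
    rw [← det_conj (id - sQ) φ]
    congr 1
    ext f
    simp
  have hdual : id - sW.dualMap = (id - sW).dualMap := by
    ext f w
    simp [dualMap_apply]
  have := det_mul_det_id_sub_of_comp_eq_id hinv
  rwa [det_dualMap, hconj, hdual, det_dualMap, Subspace.dual_finrank_eq] at this

end LinearMap.BilinForm

theorem abs_det_one_sub_restrict_lagrangian_general
    (V : Type*) [AddCommGroup V] [Module ℂ V] [FiniteDimensional ℂ V]
    (B : LinearMap.BilinForm ℂ V) (hBnd : B.Nondegenerate)
    (s : V ≃ₗ[ℂ] V) (hsB : ∀ x y : V, B (s x) (s y) = B x y)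
    (W : Submodule ℂ V) (hW : ∀ x ∈ W, s.toLinearMap x ∈ W)
    (hLag : ∀ v : V, v ∈ W ↔ ∀ w ∈ W, B v w = 0)
    (hdet : ‖LinearMap.det (s.toLinearMap.restrict hW)‖ = 1) :
    ‖LinearMap.det ((LinearMap.id : W →ₗ[ℂ] W) - s.toLinearMap.restrict hW)‖ ^ 2 =
      ‖LinearMap.det ((LinearMap.id : V →ₗ[ℂ] V) - s.toLinearMap)‖ := by
  have hquot := congrArg (‖·‖) (BilinForm.det_restrict_mul_det_id_sub_mapQ hBnd hLag hsB hW)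
  simp only [norm_mul, norm_pow, norm_neg, norm_one, one_pow, one_mul, hdet] at hquot
  rw [det_id_sub_eq_det_restrict_mul_det_mapQ W _ hW, norm_mul, hquot, sq]

/-- Corollary (cor:pn_d4), abstract form: let `B` be a nondegenerate alternating bilinear form
on a finite-dimensional complex vector space `V`, `s` a linear automorphism preserving `B`, and
`W ⊆ V` an `s`-invariant Lagrangian subspace.  If `|det (s|_W)| = 1`, then
`|det (1 - s|_W)|² = |det (1 - s)|`. -/
theorem abs_det_one_sub_restrict_lagrangian
    (V : Type*) [AddCommGroup V] [Module ℂ V] [FiniteDimensional ℂ V]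
    (B : LinearMap.BilinForm ℂ V) (hBnd : B.Nondegenerate)
    (hBalt : ∀ x : V, B x x = 0)
    (s : V ≃ₗ[ℂ] V) (hsB : ∀ x y : V, B (s x) (s y) = B x y)
    (W : Submodule ℂ V) (hW : ∀ x ∈ W, s.toLinearMap x ∈ W)
    (hLag : ∀ v : V, v ∈ W ↔ ∀ w ∈ W, B v w = 0)
    (hdet : ‖LinearMap.det (s.toLinearMap.restrict hW)‖ = 1) :
    ‖LinearMap.det ((LinearMap.id : W →ₗ[ℂ] W) - s.toLinearMap.restrict hW)‖ ^ 2 =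
      ‖LinearMap.det ((LinearMap.id : V →ₗ[ℂ] V) - s.toLinearMap)‖ :=
  abs_det_one_sub_restrict_lagrangian_general V B hBnd s hsB W hW hLag hdet
end

section
/- Let L be a Lie algebra over a commutative ring R, let a : L → L be a Lie algebra automorphism, and let X, Y ∈ L. Assume: (i) a(a(a(X))) = X; (ii) a(Y) = Y; (iii) ⁅X, a(X)⁆ = 0, ⁅X, a(a(X))⁆ = 0, and ⁅a(X), a(a(X))⁆ = 0. Then a fixes the element ⁅⁅⁅X, Y⁆, a(X)⁆, a(a(X))⁆, i.e. a(⁅⁅⁅X, Y⁆, a(X)⁆, a(a(X))⁆) = ⁅⁅⁅X, Y⁆, a(X)⁆, a(a(X))⁆. -/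
lemma swap_inner {L : Type*} [LieRing L] (Z1 Z2 Y : L) (h : ⁅Z1, Z2⁆ = 0) :
    ⁅⁅Z1, Y⁆, Z2⁆ = ⁅⁅Z2, Y⁆, Z1⁆ := by
  have h1 : ⁅⁅Z1, Y⁆, Z2⁆ = ⁅Z1, ⁅Y, Z2⁆⁆ - ⁅Y, ⁅Z1, Z2⁆⁆ := lie_lie _ _ _
  have h2 : ⁅⁅Z2, Y⁆, Z1⁆ = ⁅Z2, ⁅Y, Z1⁆⁆ - ⁅Y, ⁅Z2, Z1⁆⁆ := lie_lie _ _ _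
  have h3 : ⁅Z1, ⁅Z2, Y⁆⁆ = ⁅⁅Z1, Z2⁆, Y⁆ + ⁅Z2, ⁅Z1, Y⁆⁆ := leibniz_lie _ _ _
  rw [h] at h1 h3
  have h' : ⁅Z2, Z1⁆ = 0 := by rw [← lie_skew, h, neg_zero]
  rw [h'] at h2
  simp only [lie_zero, sub_zero] at h1 h2
  simp only [zero_lie, zero_add] at h3
  rw [h1, h2, ← lie_skew Y Z2, ← lie_skew Y Z1, lie_neg, lie_neg, h3]

lemma swap_outer {L : Type*} [LieRing L] (W Z2 Z3 : L) (h : ⁅Z2, Z3⁆ = 0) :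
    ⁅⁅W, Z2⁆, Z3⁆ = ⁅⁅W, Z3⁆, Z2⁆ := by
  have := lie_lie W Z2 Z3
  -- ⁅⁅W,Z2⁆,Z3⁆ = ⁅W,⁅Z2,Z3⁆⁆ - ⁅Z2,⁅W,Z3⁆⁆
  rw [h, lie_zero, zero_sub, ← lie_skew] at this
  rw [← lie_skew ⁅W, Z2⁆ Z3, ← lie_skew ⁅W, Z3⁆ Z2]
  exact this

/-- Lemma (lem:jacobi), part (2), Lie-algebra content: if `a` is a Lie algebra automorphism with
`a (a (a X)) = X`, `a Y = Y` and `⁅X, a X⁆ = ⁅X, a (a X)⁆ = ⁅a X, a (a X)⁆ = 0`, then `a`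
fixes the element `⁅⁅⁅X, Y⁆, a X⁆, a (a X)⁆`. -/
theorem jacobi_automorphism_fixed
    (R L : Type*) [CommRing R] [LieRing L] [LieAlgebra R L]
    (a : L ≃ₗ⁅R⁆ L) (X Y : L)
    (h1 : a (a (a X)) = X) (h2 : a Y = Y)
    (h3 : ⁅X, a X⁆ = 0) (h4 : ⁅X, a (a X)⁆ = 0) (h5 : ⁅a X, a (a X)⁆ = 0) :
    a ⁅⁅⁅X, Y⁆, a X⁆, a (a X)⁆ = ⁅⁅⁅X, Y⁆, a X⁆, a (a X)⁆ := by
  have h4' : ⁅a (a X), X⁆ = 0 := by rw [← lie_skew, h4, neg_zero]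
  have key : a ⁅⁅⁅X, Y⁆, a X⁆, a (a X)⁆ = ⁅⁅⁅a X, Y⁆, a (a X)⁆, X⁆ := by
    simp only [LieEquiv.map_lie, h1, h2]
  rw [key, swap_outer _ _ _ h4', swap_inner _ _ _ h3]
end

section
/- Let A be an abelian group. For i = 1, 2, let A_i be a group together with a surjective homomorphism p_i : A_i → A whose kernel has exactly two elements, generated by an element ε_i. Let X be a nonempty set, and for each x ∈ X and i = 1,2 let ρ_{x,i} : A_i → ℂˣ be a group homomorphism that is genuine, meaning ρ_{x,i}(ε_i) = −1. Assume that for all a₁ ∈ A₁ and a₂ ∈ A₂ with p₁(a₁) = p₂(a₂): (1) ρ_{x,1}(a₁)² = ρ_{x,2}(a₂)² for every x ∈ X, and (2) ρ_{x,1}(a₁) · ρ_{x',1}(a₁)⁻¹ = ρ_{x,2}(a₂) · ρ_{x',2}(a₂)⁻¹ for all x, x' ∈ X. Then there exists a unique group isomorphism i : A₁ → A₂ such that p₂ ∘ i = p₁ and ρ_{x,2} ∘ i = ρ_{x,1} for all x ∈ X. -/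
lemma pm_of_sq_eq (u v : ℂˣ) (h : u ^ 2 = v ^ 2) : u = v ∨ u = -v := by
  have h' : (u : ℂ) * u = (v : ℂ) * v := by
    have := congrArg Units.val h
    push_cast [sq] at this
    exact this
  rcases mul_self_eq_mul_self_iff.mp h' with h | h
  · exact Or.inl (Units.ext h)
  · exact Or.inr (Units.ext (by push_cast; exact h))

lemma ne_neg_self (u : ℂˣ) : u ≠ -u := by
  intro h
  have h' : (u : ℂ) = -(u : ℂ) := by exact_mod_cast congrArg Units.val h
  exact u.ne_zero (by linear_combination h' / 2)


/-- Lemma 2.4.1 (lem:cover_id): let `A` be an abelian group and `A₁, A₂` two extensions of `A`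
by `{±1}` (surjections `pᵢ : Aᵢ → A` with kernel `{1, εᵢ}` of order two).  Suppose given, for
each element `x` of a nonempty set `X`, genuine characters `ρ_{x,i} : Aᵢ → ℂˣ`
(i.e. `ρ_{x,i} εᵢ = -1`), such that for compatible elements `a₁, a₂` (i.e. `p₁ a₁ = p₂ a₂`)
the squares agree and the ratios agree.  Then there is a unique isomorphism `i : A₁ ≃* A₂`
of extensions with `ρ_{x,2} ∘ i = ρ_{x,1}` for all `x ∈ X`. -/
theorem double_cover_identification
    (A A₁ A₂ : Type*) [CommGroup A] [Group A₁] [Group A₂]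
    (X : Type*) [Nonempty X]
    (p₁ : A₁ →* A) (p₂ : A₂ →* A)
    (hp₁ : Function.Surjective p₁) (hp₂ : Function.Surjective p₂)
    (ε₁ : A₁) (ε₂ : A₂) (hε₁ : ε₁ ≠ 1) (hε₂ : ε₂ ≠ 1)
    (hker₁ : ∀ a : A₁, p₁ a = 1 ↔ a = 1 ∨ a = ε₁)
    (hker₂ : ∀ a : A₂, p₂ a = 1 ↔ a = 1 ∨ a = ε₂)
    (ρ₁ : X → A₁ →* ℂˣ) (ρ₂ : X → A₂ →* ℂˣ)
    (hgen₁ : ∀ x : X, ρ₁ x ε₁ = -1) (hgen₂ : ∀ x : X, ρ₂ x ε₂ = -1)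
    (hsq : ∀ (a₁ : A₁) (a₂ : A₂), p₁ a₁ = p₂ a₂ → ∀ x : X, (ρ₁ x a₁) ^ 2 = (ρ₂ x a₂) ^ 2)
    (hrat : ∀ (a₁ : A₁) (a₂ : A₂), p₁ a₁ = p₂ a₂ →
      ∀ x x' : X, ρ₁ x a₁ * (ρ₁ x' a₁)⁻¹ = ρ₂ x a₂ * (ρ₂ x' a₂)⁻¹) :
    ∃! i : A₁ ≃* A₂, (∀ a : A₁, p₂ (i a) = p₁ a) ∧ ∀ (x : X) (a : A₁), ρ₂ x (i a) = ρ₁ x a := by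
  obtain ⟨x₀⟩ := ‹Nonempty X›
  have hpε₁ : p₁ ε₁ = 1 := (hker₁ ε₁).mpr (Or.inr rfl)
  have hpε₂ : p₂ ε₂ = 1 := (hker₂ ε₂).mpr (Or.inr rfl)
  -- uniqueness of lifts with prescribed character value
  have uniq : ∀ b c : A₂, p₂ b = p₂ c → ρ₂ x₀ b = ρ₂ x₀ c → b = c := by
    intro b c hp hρ
    have h1 : p₂ (b⁻¹ * c) = 1 := by rw [map_mul, map_inv, hp, inv_mul_cancel]
    rcases (hker₂ _).mp h1 with h | h
    · exact (eq_of_inv_mul_eq_one h).symm ▸ rfl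
    · exfalso
      have hc : c = b * ε₂ := by
        have := congrArg (b * ·) h
        simpa [mul_assoc] using this
      rw [hc, map_mul, hgen₂, mul_neg_one] at hρ
      exact ne_neg_self _ hρ
  have uniq₁ : ∀ b c : A₁, p₁ b = p₁ c → ρ₁ x₀ b = ρ₁ x₀ c → b = c := by
    intro b c hp hρ
    have h1 : p₁ (b⁻¹ * c) = 1 := by rw [map_mul, map_inv, hp, inv_mul_cancel]
    rcases (hker₁ _).mp h1 with h | h
    · exact (eq_of_inv_mul_eq_one h).symm ▸ rfl
    · exfalso
      have hc : c = b * ε₁ := by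
        have := congrArg (b * ·) h
        simpa [mul_assoc] using this
      rw [hc, map_mul, hgen₁, mul_neg_one] at hρ
      exact ne_neg_self _ hρ
  -- existence of the lift
  have key : ∀ a₁ : A₁, ∃ a₂ : A₂, p₂ a₂ = p₁ a₁ ∧ ρ₂ x₀ a₂ = ρ₁ x₀ a₁ := by
    intro a₁
    obtain ⟨b, hb⟩ := hp₂ (p₁ a₁)
    rcases pm_of_sq_eq _ _ (hsq a₁ b hb.symm x₀) with h | h
    · exact ⟨b, hb, h.symm⟩
    · refine ⟨b * ε₂, ?_, ?_⟩
      · rw [map_mul, hpε₂, mul_one, hb]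
      · rw [map_mul, hgen₂, mul_neg_one]
        exact h.symm
  choose f hfp hfρ using key
  have hfρall : ∀ (x : X) (a : A₁), ρ₂ x (f a) = ρ₁ x a := by
    intro x a
    have hr := hrat a (f a) (hfp a).symm x x₀
    rw [hfρ a] at hr
    exact (mul_right_cancel hr).symm
  have hfmul : ∀ a b : A₁, f (a * b) = f a * f b := by
    intro a b
    refine uniq _ _ ?_ ?_
    · rw [hfp, map_mul, map_mul, hfp, hfp]
    · rw [hfρ, map_mul, map_mul, hfρ, hfρ]
  have hfinj : Function.Injective f := by
    intro a b h
    refine uniq₁ a b ?_ ?_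
    · rw [← hfp a, ← hfp b, h]
    · rw [← hfρ a, ← hfρ b, h]
  have hfsurj : Function.Surjective f := by
    intro c
    obtain ⟨a, ha⟩ := hp₁ (p₂ c)
    rcases pm_of_sq_eq _ _ (hsq a c ha x₀) with h | h
    · exact ⟨a, uniq _ _ (by rw [hfp, ha]) (by rw [hfρ, h])⟩
    · refine ⟨a * ε₁, uniq _ _ ?_ ?_⟩
      · rw [hfp, map_mul, hpε₁, mul_one, ha]
      · rw [hfρ, map_mul, hgen₁, mul_neg_one, h, neg_neg]
  refine ⟨MulEquiv.mk (Equiv.ofBijective f ⟨hfinj, hfsurj⟩) hfmul, ⟨hfp, hfρall⟩, ?_⟩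
  intro j ⟨hjp, hjρ⟩
  ext a
  show j a = f a
  exact uniq _ _ (by rw [hjp, hfp]) (by rw [hjρ, hfρ])
end

section
/- Let S be a group, X a nonempty set, and suppose given group homomorphisms q_x : S → ℂˣ for each x ∈ X and d_{x,y} : S → ℂˣ for each pair x, y ∈ X, satisfying d_{x,y}(s)² = q_x(s) · q_y(s)⁻¹, d_{x,y}(s) · d_{y,z}(s) = d_{x,z}(s), and d_{x,x}(s) = 1 for all s ∈ S. Define S_X = { (s, c) ∈ S × (X → ℂˣ) : c(x)² = q_x(s) and c(x) · c(y)⁻¹ = d_{x,y}(s) for all x, y ∈ X }. Then: (i) S_X is a subgroup of S × (X → ℂˣ), the projection p : S_X → S, (s, c) ↦ s, is surjective, and its kernel consists exactly of the two elements (1, const 1) and (1, const −1); (ii) for any fixed x₀ ∈ X, the map (s, c) ↦ (s, c(x₀)) is a group isomorphism from S_X onto the pullback { (s, z) ∈ S × ℂˣ : z² = q_{x₀}(s) }. -/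
/-- The explicit double cover `S_X` of §2.1: given characters `q x : S → ℂˣ` and
`d x y : S → ℂˣ`, it is the set of pairs `(s, c)` with `c x ^ 2 = q x s` and
`c x / c y = d x y s`. -/
def explicitCover (S : Type*) [Group S] (X : Type*)
    (q : X → S →* ℂˣ) (d : X → X → S →* ℂˣ) : Set (S × (X → ℂˣ)) :=
  { p | (∀ x : X, (p.2 x) ^ 2 = q x p.1) ∧ ∀ x y : X, p.2 x * (p.2 y)⁻¹ = d x y p.1 }

lemma exists_sqrt_unit (u : ℂˣ) : ∃ w : ℂˣ, w ^ 2 = u := by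
  obtain ⟨z, hz⟩ := Complex.isAlgClosed.exists_pow_nat_eq (u : ℂ) (n := 2) (by norm_num)
  have hz0 : z ≠ 0 := by
    intro h; rw [h] at hz; simp at hz; exact u.ne_zero hz.symm
  exact ⟨Units.mk0 z hz0, by ext; simpa using hz⟩

def explicitSubgroup (S : Type*) [Group S] (X : Type*)
    (q : X → S →* ℂˣ) (d : X → X → S →* ℂˣ) : Subgroup (S × (X → ℂˣ)) where
  carrier := explicitCover S X q d
  one_mem' := ⟨fun x => by simp, fun x y => by simp⟩
  mul_mem' := by
    rintro a b ⟨ha1, ha2⟩ ⟨hb1, hb2⟩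
    refine ⟨fun x => ?_, fun x y => ?_⟩
    · show (a.2 x * b.2 x) ^ 2 = _
      rw [mul_pow, ha1, hb1, ← map_mul]; rfl
    · show a.2 x * b.2 x * (a.2 y * b.2 y)⁻¹ = _
      rw [mul_inv]
      calc a.2 x * b.2 x * ((a.2 y)⁻¹ * (b.2 y)⁻¹)
          = (a.2 x * (a.2 y)⁻¹) * (b.2 x * (b.2 y)⁻¹) := by
            rw [mul_mul_mul_comm]
        _ = d x y a.1 * d x y b.1 := by rw [ha2, hb2]
        _ = d x y (a * b).1 := by rw [← map_mul]; rfl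
  inv_mem' := by
    rintro a ⟨ha1, ha2⟩
    refine ⟨fun x => ?_, fun x y => ?_⟩
    · show ((a.2 x)⁻¹) ^ 2 = q x a.1⁻¹
      rw [inv_pow, ha1, map_inv]
    · show (a.2 x)⁻¹ * ((a.2 y)⁻¹)⁻¹ = d x y a.1⁻¹
      rw [inv_inv, map_inv, ← ha2, mul_inv, inv_inv, mul_comm]

/-- §2.1: (i) `S_X` is a subgroup of `S × (X → ℂˣ)`, the projection `(s, c) ↦ s` is surjective
onto `S`, and its kernel consists exactly of the two elements `(1, const 1)` and
`(1, const (-1))`; (ii) for any fixed `x₀ ∈ X`, the map `(s, c) ↦ (s, c x₀)` is a group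
isomorphism from `S_X` onto the pullback `{(s, z) : z² = q x₀ s}`. -/
theorem explicitCover_spec (S : Type*) [Group S] (X : Type*) [Nonempty X]
    (q : X → S →* ℂˣ) (d : X → X → S →* ℂˣ)
    (hd2 : ∀ (x y : X) (s : S), (d x y s) ^ 2 = q x s * (q y s)⁻¹)
    (hdtrans : ∀ (x y z : X) (s : S), d x y s * d y z s = d x z s)
    (hdrefl : ∀ (x : X) (s : S), d x x s = 1)
    (x₀ : X) :
    -- (i) `S_X` is a subgroup
    (∃ G : Subgroup (S × (X → ℂˣ)), (G : Set (S × (X → ℂˣ))) = explicitCover S X q d) ∧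
    -- the projection to `S` is surjective
    (∀ s : S, ∃ c : X → ℂˣ, (s, c) ∈ explicitCover S X q d) ∧
    -- and its kernel consists exactly of `(1, const 1)` and `(1, const (-1))`
    ({ p ∈ explicitCover S X q d | p.1 = 1 } =
      {((1 : S), fun _ => (1 : ℂˣ)), ((1 : S), fun _ => (-1 : ℂˣ))}) ∧
    -- (ii) `(s, c) ↦ (s, c x₀)` is a bijection from `S_X` onto the pullback ...
    (Set.BijOn (fun p : S × (X → ℂˣ) => ((p.1, p.2 x₀) : S × ℂˣ))
      (explicitCover S X q d) { p : S × ℂˣ | p.2 ^ 2 = q x₀ p.1 }) ∧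
    -- ... which is a group homomorphism
    (∀ p p' : S × (X → ℂˣ),
      (((p * p').1, (p * p').2 x₀) : S × ℂˣ) = ((p.1, p.2 x₀) : S × ℂˣ) * (p'.1, p'.2 x₀)) := by
  -- surjectivity construction
  have surj : ∀ s : S, ∀ z : ℂˣ, z ^ 2 = q x₀ s →
      ((s, fun x => d x x₀ s * z) ∈ explicitCover S X q d ∧
        (d x₀ x₀ s * z : ℂˣ) = z) := by
    intro s z hz
    refine ⟨⟨fun x => ?_, fun x y => ?_⟩, by rw [hdrefl, one_mul]⟩
    · show (d x x₀ s * z) ^ 2 = q x s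
      rw [mul_pow, hz, hd2, inv_mul_cancel_right]
    · show (d x x₀ s * z) * (d y x₀ s * z)⁻¹ = d x y s
      rw [mul_inv, mul_mul_mul_comm, mul_inv_cancel, mul_one,
        ← hdtrans x y x₀ s, mul_inv_cancel_right]
  refine ⟨?_, ?_, ?_, ?_, ?_⟩
  · -- subgroup
    exact ⟨explicitSubgroup S X q d, rfl⟩
  · intro s
    obtain ⟨z, hz⟩ := exists_sqrt_unit (q x₀ s)
    exact ⟨_, (surj s z hz).1⟩
  · ext p
    simp only [Set.mem_setOf_eq, Set.mem_insert_iff, Set.mem_singleton_iff]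
    constructor
    · rintro ⟨⟨h1, h2⟩, hp1⟩
      have hconst : ∀ x, p.2 x = p.2 x₀ := by
        intro x
        have := h2 x x₀
        rw [hp1, map_one] at this
        exact mul_inv_eq_one.mp this
      have hsq : p.2 x₀ ^ 2 = 1 := by rw [h1 x₀, hp1, map_one]
      have : p.2 x₀ = 1 ∨ p.2 x₀ = -1 := by
        have : ((p.2 x₀ : ℂ) - 1) * ((p.2 x₀ : ℂ) + 1) = 0 := by
          have : ((p.2 x₀ : ℂ)) ^ 2 = 1 := by
            have := congrArg (Units.val) hsq; simpa using this
          ring_nf; linear_combination this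
        rcases mul_eq_zero.mp this with h | h
        · left; ext; simpa [sub_eq_zero] using h
        · right; ext; rw [Units.val_neg, Units.val_one]; linear_combination h
      rcases this with h | h
      · left; ext1
        · exact hp1
        · funext x; rw [hconst x, h]
      · right; ext1
        · exact hp1
        · funext x; rw [hconst x, h]
    · rintro (h | h) <;> subst h <;>
        exact ⟨⟨fun x => by simp, fun x y => by simp⟩, rfl⟩
  · refine ⟨fun p hp => hp.1 x₀, fun a ha b hb hab => ?_, fun z hz => ?_⟩
    · have hab' : (a.1, a.2 x₀) = (b.1, b.2 x₀) := hab
      obtain ⟨h1, h2⟩ := Prod.mk.injEq .. ▸ hab'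
      ext1
      · exact h1
      · funext x
        have ha' := ha.2 x x₀
        have hb' := hb.2 x x₀
        rw [h1] at ha'
        have : a.2 x * (a.2 x₀)⁻¹ = b.2 x * (b.2 x₀)⁻¹ := by rw [ha', hb']
        rw [h2] at this
        exact mul_right_cancel this
    · obtain ⟨hmem, hval⟩ := surj z.1 z.2 hz
      exact ⟨_, hmem, by simp [hval]⟩
  · intro p p'; rfl
end

section
/- Let Φ be a finite, reduced, crystallographic root system (spanning a real root pairing with nonempty set of roots). For any finite family of roots β₁, …, β_n of Φ (n ≥ 0), there exists a root α ∈ Φ such that the sum of Cartan integers Σ_{j=1}^{n} ⟨α, βⱼ∨⟩ is an even integer, where ⟨α, β∨⟩ = 2(α, β)/(β, β) denotes the integer pairing of the root α with the coroot of β. -/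
/-!
Write `f α = Σⱼ ⟨α, βⱼ∨⟩`. Since `f` is linear in `α`, reflecting gives
`f (s_β α) = f α - ⟨α, β∨⟩ f β`. If `f` took only odd values on roots, this would force every
Cartan integer `⟨α, β∨⟩` to be even, and then `f α`, a sum of Cartan integers, would be even.
-/

/-- A root system (the former Mathlib structure): a root pairing whose roots and coroots span
their ambient modules. -/
structure RootSystem (ι R M N : Type*) [CommRing R] [AddCommGroup M] [Module R M]
    [AddCommGroup N] [Module R N] extends RootPairing ι R M N where
  span_root_eq_top : Submodule.span R (Set.range root) = ⊤
  span_coroot_eq_top : Submodule.span R (Set.range coroot) = ⊤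

namespace RootPairing

variable {ι R M N : Type*} [CommRing R] [CharZero R] [AddCommGroup M] [Module R M]
  [AddCommGroup N] [Module R N] (P : RootPairing ι R M N) [P.IsCrystallographic]

lemma pairingIn_reflectionPerm_left (i j k : ι) :
    P.pairingIn ℤ (P.reflectionPerm j i) k =
      P.pairingIn ℤ i k - P.pairingIn ℤ i j * P.pairingIn ℤ j k := by
  have hroot : P.root (P.reflectionPerm j i) =
      (1 : ℤ) • P.root i + (-P.pairingIn ℤ i j) • P.root j := by
    rw [root_reflectionPerm, reflection_apply_root' ℤ, one_smul, neg_smul, sub_eq_add_neg]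
  rw [pairingIn_eq_add_of_root_eq_smul_add_smul hroot]
  simp only [smul_eq_mul]
  ring

lemma even_pairingIn_of_forall_odd_sum {κ : Type*} [Fintype κ] (β : κ → ι)
    (hodd : ∀ i, Odd (∑ t, P.pairingIn ℤ i (β t))) (i j : ι) :
    Even (P.pairingIn ℤ i j) := by
  have hrefl : ∑ t, P.pairingIn ℤ i (β t) - ∑ t, P.pairingIn ℤ (P.reflectionPerm j i) (β t) =
      P.pairingIn ℤ i j * ∑ t, P.pairingIn ℤ j (β t) := by
    simp only [pairingIn_reflectionPerm_left, Finset.sum_sub_distrib, Finset.mul_sum]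
    ring
  have hprod : Even (P.pairingIn ℤ i j * ∑ t, P.pairingIn ℤ j (β t)) :=
    hrefl ▸ (hodd i).sub_odd (hodd _)
  exact (Int.even_mul.mp hprod).resolve_right (Int.not_even_iff_odd.mpr (hodd j))

lemma exists_even_sum_pairingIn [Nonempty ι] {κ : Type*} [Fintype κ] (β : κ → ι) :
    ∃ i, Even (∑ t, P.pairingIn ℤ i (β t)) := by
  by_contra! h
  simp only [Int.not_even_iff_odd] at h
  obtain ⟨i⟩ := ‹Nonempty ι›
  exact Int.not_even_iff_odd.mpr (h i)
    (Finset.even_sum _ fun t _ => P.even_pairingIn_of_forall_odd_sum β h i (β t))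

end RootPairing

theorem exists_root_even_pairing_sum_general
    {ι M N : Type*} [AddCommGroup M] [Module ℝ M] [AddCommGroup N] [Module ℝ N]
    [Nonempty ι]
    (P : RootSystem ι ℝ M N)
    (hcrys : P.toRootPairing.IsCrystallographic)
    (n : ℕ) (β : Fin n → ι) :
    ∃ α : ι, ∃ m : ℤ, ∑ j : Fin n, P.toRootPairing.pairing α (β j) = 2 * (m : ℝ) := by
  obtain ⟨α, m, hm⟩ := P.toRootPairing.exists_even_sum_pairingIn β
  refine ⟨α, m, ?_⟩
  simp only [← P.toRootPairing.algebraMap_pairingIn ℤ, algebraMap_int_eq, eq_intCast,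
    ← Int.cast_sum, hm, Int.cast_add]
  ring

/-- Corollary (trivalpha), root-theoretic content: in a finite, reduced, crystallographic
root system, for any finite family of roots `β₁, …, βₙ` there exists a root `α` such that the
sum of Cartan integers `Σⱼ ⟨α, βⱼ∨⟩` is an even integer. -/
theorem exists_root_even_pairing_sum
    {ι M N : Type*} [AddCommGroup M] [Module ℝ M] [AddCommGroup N] [Module ℝ N]
    [Finite ι] [Nonempty ι]
    (P : RootSystem ι ℝ M N)
    (hcrys : P.toRootPairing.IsCrystallographic)
    (hred : P.toRootPairing.IsReduced)
    (n : ℕ) (β : Fin n → ι) :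
    ∃ α : ι, ∃ m : ℤ, ∑ j : Fin n, P.toRootPairing.pairing α (β j) = 2 * (m : ℝ) :=
  exists_root_even_pairing_sum_general P hcrys n β
end
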